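/- arXiv:0903.5342 — 3 statements merged into one kernel-verified Lean document; each statement's English description precedes it below -/
import Mathlib

section
/- The sequence (a_k) defined by a_0 = u and a_{k+1} = s·Σ_{i=0}^{k} a_i·a_{k-i} (with u, s ≥ 0, u + s = 1) satisfies a_k = 2u(−4su)^k · binomial(1/2, k+1), equivalently a_k = u(4su)^k / ((k+1)·4^k) · binomial(2k, k). -/
/-!
Expanding the recursion shows `a k = u ^ (k + 1) * s ^ k * catalan k`: the Catalan numbers satisfy
the same quadratic convolution recursion, and each product `a i * a (k - i)` carries exactly
`u ^ (k + 2) * s ^ k`. Both closed forms are then rewritings of `catalan k = C(2k, k) / (k + 1)`,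
the first via `binomial(1/2, k + 1) = (-1/4) ^ k * C(2k, k) / (2 (k + 1))`.
-/

open Finset

/-- Generalized binomial coefficient `binomial(r, k) = r(r-1)⋯(r-k+1)/k!`. -/
noncomputable def genBinom (r : ℝ) (k : ℕ) : ℝ :=
  (∏ i ∈ Finset.range k, (r - i)) / (Nat.factorial k)

lemma genBinom_succ (r : ℝ) (k : ℕ) :
    genBinom r (k + 1) = genBinom r k * (r - k) / (k + 1) := by
  simp only [genBinom, prod_range_succ, Nat.factorial_succ, Nat.cast_mul, Nat.cast_succ]
  field_simp

lemma genBinom_one_half_succ (k : ℕ) :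
    genBinom (1 / 2) (k + 1) = (-1 / 4) ^ k * k.centralBinom / (2 * (k + 1)) := by
  induction k with
  | zero => simp [genBinom]
  | succ k ih =>
    have hcentral : ((k : ℝ) + 1) * (k + 1).centralBinom = 2 * (2 * k + 1) * k.centralBinom := by
      exact_mod_cast Nat.succ_mul_centralBinom_succ k
    rw [genBinom_succ, ih]
    push_cast
    field_simp
    linear_combination (1 / 2 : ℝ) * (-1 / 4 : ℝ) ^ k * hcentral

lemma cast_catalan_eq_centralBinom_div (k : ℕ) :
    (catalan k : ℝ) = k.centralBinom / (k + 1) := by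
  rw [eq_div_iff (by positivity), mul_comm]
  exact_mod_cast succ_mul_catalan_eq_centralBinom k

theorem eq_pow_mul_pow_mul_catalan_of_convolution {R : Type*} [CommSemiring R] (u s : R)
    (a : ℕ → R) (h0 : a 0 = u)
    (hrec : ∀ k, a (k + 1) = s * ∑ i ∈ range (k + 1), a i * a (k - i)) (k : ℕ) :
    a k = u ^ (k + 1) * s ^ k * catalan k := by
  induction k using Nat.strong_induction_on with
  | _ k ih =>
    cases k with
    | zero => simp [h0]
    | succ k =>
      have hterm : ∀ i ∈ range (k + 1), a i * a (k - i) =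
          u ^ (k + 2) * s ^ k * ((catalan i : R) * catalan (k - i)) := by
        intro i hi
        obtain ⟨j, rfl⟩ := Nat.exists_eq_add_of_le (Nat.lt_succ_iff.mp (mem_range.mp hi))
        rw [ih i (by omega), ih (i + j - i) (by omega), Nat.add_sub_cancel_left]
        ring
      have hcat :
          (catalan (k + 1) : R) = ∑ i ∈ range (k + 1), (catalan i : R) * catalan (k - i) := by
        rw [catalan_succ, ← sum_range fun i => catalan i * catalan (k - i)]
        push_cast
        rfl
      rw [hrec k, sum_congr rfl hterm, ← mul_sum, hcat]
      ring

theorem stmt1_general (u s : ℝ)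
    (a : ℕ → ℝ) (h0 : a 0 = u)
    (hrec : ∀ k, a (k + 1) = s * ∑ i ∈ Finset.range (k + 1), a i * a (k - i)) :
    ∀ k, a k = 2 * u * (-(4 * s * u))^k * genBinom (1/2) (k + 1) ∧
      a k = u * (4 * s * u)^k / ((k + 1) * 4^k) * Nat.choose (2 * k) k := by
  intro k
  rw [eq_pow_mul_pow_mul_catalan_of_convolution u s a h0 hrec k,
    cast_catalan_eq_centralBinom_div, genBinom_one_half_succ, ← Nat.centralBinom_eq_two_mul_choose]
  constructor
  · have hsign : (-(4 * s * u)) ^ k * (-1 / 4) ^ k = (s * u) ^ k := by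
      rw [← mul_pow]
      ring
    field_simp
    linear_combination (-u * k.centralBinom) * hsign
  · field_simp
    ring

/-- The sequence a_0 = u, a_{k+1} = s·Σ_{i=0}^k a_i a_{k-i} has closed form
a_k = 2u(−4su)^k binomial(1/2, k+1) = u(4su)^k binomial(2k,k)/((k+1)4^k). -/
theorem stmt1 (u s : ℝ) (hu : 0 ≤ u) (hs : 0 ≤ s) (hus : u + s = 1)
    (a : ℕ → ℝ) (h0 : a 0 = u)
    (hrec : ∀ k, a (k + 1) = s * ∑ i ∈ Finset.range (k + 1), a i * a (k - i)) :
    ∀ k, a k = 2 * u * (-(4 * s * u))^k * genBinom (1/2) (k + 1) ∧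
      a k = u * (4 * s * u)^k / ((k + 1) * 4^k) * Nat.choose (2 * k) k :=
  stmt1_general u s a h0 hrec
end

section
/- For u+s=1 and s > 1/2, the series Σ_{k=0}^∞ a_k with a_k = u(4su)^k binomial(2k,k)/((k+1)4^k) converges to 1/s − 1, so the probability of an infinite tree 1 − Σ_k a_k equals 2 − 1/s > 0. -/
/-!
With `x = s u`, the terms are `u · catalan k · x^k`, so everything reduces to the Catalan
generating function `C(x) = ∑ catalan k x^k` at `x = s u ≤ 1/4`. The Catalan recurrence gives
`C = 1 + x C²`, whose roots are `1/s` and `1/u`. The same recurrence shows inductively that every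
partial sum stays below the smaller root `1/s`, which yields both convergence and `C = 1/s`.
-/

open Finset

theorem sum_range_sum_antidiagonal_le_sum_mul_sum {R : Type*} [CommSemiring R] [PartialOrder R]
    [IsOrderedRing R] {f g : ℕ → R} (hf : ∀ k, 0 ≤ f k) (hg : ∀ k, 0 ≤ g k) (n : ℕ) :
    ∑ k ∈ range n, ∑ ij ∈ antidiagonal k, f ij.1 * g ij.2 ≤
      (∑ k ∈ range n, f k) * ∑ k ∈ range n, g k := by
  have hdisj : (range n : Set ℕ).PairwiseDisjoint antidiagonal := fun a _ b _ hab =>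
    disjoint_left.2 fun ij ha hb => hab ((mem_antidiagonal.1 ha).symm.trans (mem_antidiagonal.1 hb))
  rw [← sum_biUnion hdisj, sum_mul_sum, ← sum_product']
  refine sum_le_sum_of_subset_of_nonneg ?_ fun ij _ _ => mul_nonneg (hf _) (hg _)
  intro ij hij
  simp only [mem_biUnion, mem_range, HasAntidiagonal.mem_antidiagonal, mem_product] at hij ⊢
  omega

theorem catalan_succ_mul_pow {R : Type*} [CommSemiring R] (x : R) (n : ℕ) :
    (catalan (n + 1) : R) * x ^ (n + 1) =
      x * ∑ ij ∈ antidiagonal n, (catalan ij.1 * x ^ ij.1) * (catalan ij.2 * x ^ ij.2) := by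
  rw [catalan_succ', Nat.cast_sum, sum_mul, mul_sum]
  refine sum_congr rfl fun ij hij => ?_
  rw [← mem_antidiagonal.1 hij]
  push_cast
  ring

theorem Nat.cast_catalan_eq_choose_div {K : Type*} [DivisionRing K] [CharZero K] (k : ℕ) :
    (catalan k : K) = (2 * k).choose k / (k + 1) := by
  rw [eq_div_iff (Nat.cast_add_one_ne_zero k), ← Nat.centralBinom_eq_two_mul_choose,
    ← succ_mul_catalan_eq_centralBinom]
  exact_mod_cast mul_comm _ _

theorem sum_range_catalan_mul_pow_le {x r : ℝ} (hx : 0 ≤ x) (hr : 0 ≤ r)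
    (h : 1 + x * r ^ 2 ≤ r) (n : ℕ) : ∑ k ∈ range n, (catalan k : ℝ) * x ^ k ≤ r := by
  induction n with
  | zero => simpa using hr
  | succ n ih =>
    have hterm : ∀ k, 0 ≤ (catalan k : ℝ) * x ^ k := fun k => by positivity
    have hconv := sum_range_sum_antidiagonal_le_sum_mul_sum hterm hterm n
    calc ∑ k ∈ range (n + 1), (catalan k : ℝ) * x ^ k
        = 1 + x * ∑ k ∈ range n, ∑ ij ∈ antidiagonal k,
            (catalan ij.1 * x ^ ij.1) * (catalan ij.2 * x ^ ij.2) := by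
          simp only [sum_range_succ', catalan_succ_mul_pow, ← mul_sum, catalan_zero]
          push_cast
          ring
      _ ≤ 1 + x * r ^ 2 := by
          gcongr
          rw [sq]
          exact hconv.trans (mul_le_mul ih ih (sum_nonneg fun k _ => hterm k) hr)
      _ ≤ r := h

theorem tsum_catalan_mul_pow_eq_one_add {x : ℝ} (hx : 0 ≤ x)
    (hsum : Summable fun k => (catalan k : ℝ) * x ^ k) :
    ∑' k, (catalan k : ℝ) * x ^ k = 1 + x * (∑' k, (catalan k : ℝ) * x ^ k) ^ 2 := by
  have hnorm : Summable fun k => ‖(catalan k : ℝ) * x ^ k‖ :=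
    hsum.congr fun k => (Real.norm_of_nonneg (by positivity)).symm
  nth_rewrite 1 [hsum.tsum_eq_zero_add]
  rw [sq, tsum_mul_tsum_eq_tsum_sum_antidiagonal_of_summable_norm hnorm hnorm, ← tsum_mul_left]
  simp [catalan_succ_mul_pow]

theorem hasSum_catalan_mul_pow {u s : ℝ} (hus : u + s = 1) (hu : 0 ≤ u) (hle : u ≤ s) :
    HasSum (fun k => (catalan k : ℝ) * (s * u) ^ k) (1 / s) := by
  have hs : 0 < s := by linarith
  have hroot : 1 + s * u * (1 / s) ^ 2 ≤ 1 / s := by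
    field_simp
    linarith
  have hbound := sum_range_catalan_mul_pow_le (by positivity) (by positivity) hroot
  have hsum := summable_of_sum_range_le (fun k => by positivity) hbound
  set L := ∑' k, (catalan k : ℝ) * (s * u) ^ k
  have hL : L ≤ 1 / s := Real.tsum_le_of_sum_range_le (fun k => by positivity) hbound
  have hquad : L = 1 + s * u * L ^ 2 := tsum_catalan_mul_pow_eq_one_add (by positivity) hsum
  -- `s u L` is a root of `(y - u)(y - s)`, and `L ≤ 1/s` rules out the root `s` unless `s = u`
  have hxL : s * u * L = u := by
    have hfac : (s * u * L - u) * (s * u * L - s) = 0 := by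
      linear_combination -(s * u) * hquad - (s * u * L) * hus
    have hxLle : s * u * L ≤ u := by
      calc s * u * L ≤ s * u * (1 / s) := by gcongr
        _ = u := by field_simp
    rcases mul_eq_zero.1 hfac with h | h <;> linarith
  convert hsum.hasSum
  rw [div_eq_iff hs.ne']
  linear_combination -hquad - L * hxL - L * hus

/-- For u+s=1, 1/2 < s < 1, the series Σ_k u(4su)^k binomial(2k,k)/((k+1)4^k)
converges to 1/s − 1, so the probability of an infinite tree is 2 − 1/s > 0. -/
theorem stmt3 (u s : ℝ) (hus : u + s = 1) (hs : 1/2 < s) (hs1 : s < 1) :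
    HasSum (fun k : ℕ =>
      u * (4 * s * u)^k * (Nat.choose (2 * k) k : ℝ) / ((k + 1) * 4^k)) (1/s - 1)
    ∧ 1 - (1/s - 1) = 2 - 1/s ∧ 0 < 2 - 1/s := by
  have hs0 : 0 < s := by linarith
  have hterm : ∀ k : ℕ, u * (4 * s * u) ^ k * (Nat.choose (2 * k) k : ℝ) / ((k + 1) * 4 ^ k) =
      u * ((catalan k : ℝ) * (s * u) ^ k) := fun k => by
    rw [Nat.cast_catalan_eq_choose_div, mul_pow, mul_pow]
    field_simp
    ring
  have hsum : u * (1 / s) = 1 / s - 1 := by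
    field_simp
    linarith
  refine ⟨?_, by ring, ?_⟩
  · simpa only [hterm, hsum] using
      (hasSum_catalan_mul_pow hus (by linarith) (by linarith)).mul_left u
  · have : 1 / s < 2 := by rw [div_lt_iff₀ hs0]; linarith
    linarith
end

section
/- With w_n(Δ) = 2^{-n}Γ(n+2α)Γ(α)²/(Γ(n0+α)Γ(n1+α)Γ(2α)) where n0 = n(1/2+Δ), n1 = n(1/2−Δ): if n0/n → q0 ≠ 1/2, then for every c with |c| < |q0 − 1/2|, e^{2nc²}·w_n(Δ_n) → 0 as n → ∞. -/
/-!
Writing the Gamma ratios as rising products, `w(k, m)` is at most a polynomial in `n = k + m`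
times `C(n, k) / 2 ^ n`. The Chernoff–Hoeffding bound `C(n, k) ≤ 2 ^ n exp (-2n (k/n - 1/2)²)`
then beats the factor `exp (2 n c²)` by `exp (-2 n δ)` as soon as `(k/n - 1/2)² ≥ c² + δ`,
which holds eventually because `k/n → q0` and `c² < (q0 - 1/2)²`.
-/

open Filter

/-- The weight w(n0,n1) = 2^{-(n0+n1)}·Γ(n0+n1+2α)·Γ(α)²/(Γ(n0+α)Γ(n1+α)Γ(2α)). -/
noncomputable def wght (α : ℝ) (n0 n1 : ℕ) : ℝ :=
  Real.Gamma ((n0 + n1 : ℕ) + 2 * α) * (Real.Gamma α)^2 /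
    (2^(n0 + n1) * Real.Gamma ((n0 : ℝ) + α) * Real.Gamma ((n1 : ℝ) + α) *
      Real.Gamma (2 * α))

open Real Finset Nat

theorem Real.Gamma_nat_add_eq_prod_mul {x : ℝ} (hx : 0 < x) (k : ℕ) :
    Gamma (k + x) = (∏ j ∈ range k, (x + j)) * Gamma x := by
  induction k with
  | zero => simp
  | succ k ih =>
    rw [cast_succ, add_right_comm, Gamma_add_one (by positivity), ih, prod_range_succ]
    ring

theorem prod_range_add_le_factorial_mul_pow {a : ℝ} (ha : 0 ≤ a) (n : ℕ) :
    ∏ j ∈ range n, (a + j) ≤ n ! * ((n : ℝ) + 1) ^ ⌊a⌋₊ := by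
  set s := ⌊a⌋₊
  calc ∏ j ∈ range n, (a + j)
      ≤ ∏ j ∈ range n, (((s + 1 + j : ℕ)) : ℝ) := by
        gcongr with j
        push_cast
        linarith [Nat.lt_floor_add_one a]
    _ = n ! * ((n + s).choose n : ℝ) := by
        rw [← Nat.cast_prod, ← Nat.ascFactorial_eq_prod_range,
          Nat.ascFactorial_eq_factorial_mul_choose, add_comm s n]
        push_cast; rfl
    _ ≤ n ! * ((n : ℝ) + 1) ^ s := by
        gcongr
        rw [Nat.choose_symm_add]
        exact_mod_cast Nat.choose_add_le_add_one_pow n s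

theorem min_one_mul_factorial_le_prod_range_add {a : ℝ} (ha : 0 < a) (k : ℕ) :
    min a 1 * k ! ≤ (k + 1) * ∏ j ∈ range k, (a + j) := by
  set b := min a 1
  have hb : 0 < b := lt_min ha one_pos
  have hba : b ≤ a := min_le_left a 1
  calc b * k !
      = b * ∏ j ∈ range k, ((j : ℝ) + 1) := by
        rw [← Finset.prod_range_add_one_eq_factorial]; push_cast; rfl
    _ ≤ b * ∏ j ∈ range k, (b + (j + 1 : ℕ)) := by
        refine mul_le_mul_of_nonneg_left
          (prod_le_prod (fun j _ => by positivity) fun j _ => ?_) hb.le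
        push_cast; linarith
    _ = (∏ j ∈ range k, (b + j)) * (b + k) := by
        rw [← prod_range_succ, prod_range_succ']; simp [mul_comm]
    _ ≤ (k + 1) * ∏ j ∈ range k, (a + j) := by
        rw [mul_comm]
        gcongr ?_ * ?_
        · linarith [min_le_right a 1]
        · exact prod_le_prod (fun j _ => by positivity) fun j _ => by linarith

theorem Nat.choose_mul_exp_le_one_add_exp_pow (n k : ℕ) (l : ℝ) :
    n.choose k * exp (l * k) ≤ (1 + exp l) ^ n := by
  rcases lt_or_ge n k with hnk | hkn
  · rw [Nat.choose_eq_zero_of_lt hnk, Nat.cast_zero, zero_mul]; positivity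
  have hsum : (1 + exp l) ^ n = ∑ i ∈ range (n + 1), exp (l * i) * n.choose i := by
    rw [add_comm, add_pow]
    refine sum_congr rfl fun i _ => ?_
    rw [one_pow, mul_one, ← exp_nat_mul, mul_comm (i : ℝ)]
  rw [hsum, mul_comm]
  exact single_le_sum (f := fun i : ℕ => exp (l * i) * n.choose i) (fun i _ => by positivity)
    (mem_range.mpr (Nat.lt_succ_of_le hkn))

theorem Real.one_add_exp_le_two_mul_exp (l : ℝ) : 1 + exp l ≤ 2 * exp (l / 2 + l ^ 2 / 8) := by
  have h : 1 + exp l = 2 * exp (l / 2) * cosh (l / 2) := by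
    have hsq : exp (l / 2) * exp (l / 2) = exp l := by rw [← exp_add]; ring_nf
    have hinv : exp (l / 2) * exp (-(l / 2)) = 1 := by rw [← exp_add, add_neg_cancel, exp_zero]
    rw [cosh_eq]
    linear_combination -hsq - hinv
  rw [h, exp_add, ← mul_assoc]
  gcongr
  calc cosh (l / 2) ≤ exp ((l / 2) ^ 2 / 2) := cosh_le_exp_half_sq _
    _ = exp (l ^ 2 / 8) := by ring_nf

theorem Nat.choose_le_two_pow_mul_exp (n k : ℕ) :
    (n.choose k : ℝ) ≤ 2 ^ n * exp (-2 * n * (k / n - 1 / 2) ^ 2) := by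
  rcases lt_or_ge n k with hnk | hkn
  · rw [Nat.choose_eq_zero_of_lt hnk, Nat.cast_zero]; positivity
  set t : ℝ := k / n - 1 / 2
  have hnt : n * t = k - n / 2 := by
    rcases Nat.eq_zero_or_pos n with rfl | hn
    · simp [Nat.le_zero.mp hkn]
    · simp only [t]; field_simp
  clear_value t
  -- Chernoff's exponential moment bound, optimised at `λ = 4t`.
  have hmgf := Nat.choose_mul_exp_le_one_add_exp_pow n k (4 * t)
  calc (n.choose k : ℝ)
      = n.choose k * exp (4 * t * k) * exp (-(4 * t * k)) := by
        rw [mul_assoc, ← exp_add, add_neg_cancel, exp_zero, mul_one]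
    _ ≤ (2 * exp (4 * t / 2 + (4 * t) ^ 2 / 8)) ^ n * exp (-(4 * t * k)) := by
        gcongr
        exact hmgf.trans (pow_le_pow_left₀ (by positivity) (one_add_exp_le_two_mul_exp _) n)
    _ = 2 ^ n * exp (-2 * n * t ^ 2) := by
        rw [mul_pow, ← exp_nat_mul, mul_assoc, ← exp_add]
        congr 2
        linear_combination 4 * t * hnt

theorem wght_eq_prod {α : ℝ} (hα : 0 < α) (k m : ℕ) :
    wght α k m = (∏ j ∈ range (k + m), (2 * α + j)) /
      (2 ^ (k + m) * (∏ j ∈ range k, (α + j)) * ∏ j ∈ range m, (α + j)) := by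
  have hGα := (Gamma_pos_of_pos hα).ne'
  have hG2α := (Gamma_pos_of_pos (by positivity : 0 < 2 * α)).ne'
  have hPk : ∏ j ∈ range k, (α + j) ≠ 0 := (prod_pos fun j _ => by positivity).ne'
  have hPm : ∏ j ∈ range m, (α + j) ≠ 0 := (prod_pos fun j _ => by positivity).ne'
  rw [wght, Gamma_nat_add_eq_prod_mul (by positivity), Gamma_nat_add_eq_prod_mul hα,
    Gamma_nat_add_eq_prod_mul hα]
  field_simp

theorem wght_pos {α : ℝ} (hα : 0 < α) (k m : ℕ) : 0 < wght α k m := by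
  rw [wght_eq_prod hα]
  exact div_pos (prod_pos fun j _ => by positivity)
    (mul_pos (mul_pos (by positivity) (prod_pos fun j _ => by positivity))
      (prod_pos fun j _ => by positivity))

theorem wght_le_choose_div {α : ℝ} (hα : 0 < α) (k m : ℕ) :
    wght α k m ≤ ((k + m : ℕ) + 1 : ℝ) ^ (⌊2 * α⌋₊ + 2) * (k + m).choose k /
      (min α 1 ^ 2 * 2 ^ (k + m)) := by
  set n := k + m
  set b := min α 1
  set PK := ∏ j ∈ range k, (α + j)
  set PM := ∏ j ∈ range m, (α + j)
  have hb : 0 < b := lt_min hα one_pos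
  have hPK : 0 < PK := prod_pos fun j _ => by positivity
  have hPM : 0 < PM := prod_pos fun j _ => by positivity
  have hfact : (n ! : ℝ) = n.choose k * k ! * m ! := by
    have := Nat.add_choose_mul_factorial_mul_factorial k m
    rw [← Nat.choose_symm_add] at this
    exact_mod_cast this.symm
  have hk : b * k ! ≤ (n + 1) * PK := by
    refine (min_one_mul_factorial_le_prod_range_add hα k).trans ?_
    gcongr; exact_mod_cast Nat.le_add_right k m
  have hm : b * m ! ≤ (n + 1) * PM := by
    refine (min_one_mul_factorial_le_prod_range_add hα m).trans ?_
    gcongr; exact_mod_cast Nat.le_add_left m k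
  have key : b ^ 2 * ∏ j ∈ range n, (2 * α + j) ≤
      (n + 1) ^ (⌊2 * α⌋₊ + 2) * n.choose k * PK * PM :=
    calc b ^ 2 * ∏ j ∈ range n, (2 * α + j)
        ≤ b ^ 2 * (n ! * ((n : ℝ) + 1) ^ ⌊2 * α⌋₊) := by
          gcongr; exact prod_range_add_le_factorial_mul_pow (by positivity) n
      _ = n.choose k * ((n : ℝ) + 1) ^ ⌊2 * α⌋₊ * ((b * k !) * (b * m !)) := by
          rw [hfact]; ring
      _ ≤ n.choose k * ((n : ℝ) + 1) ^ ⌊2 * α⌋₊ * (((n + 1) * PK) * ((n + 1) * PM)) := by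
          gcongr
      _ = (n + 1) ^ (⌊2 * α⌋₊ + 2) * n.choose k * PK * PM := by ring
  rw [wght_eq_prod hα, div_le_div_iff₀ (by positivity) (by positivity)]
  calc (∏ j ∈ range n, (2 * α + j)) * (b ^ 2 * 2 ^ n)
      = b ^ 2 * (∏ j ∈ range n, (2 * α + j)) * 2 ^ n := by ring
    _ ≤ (n + 1) ^ (⌊2 * α⌋₊ + 2) * n.choose k * PK * PM * 2 ^ n := by gcongr
    _ = _ := by ring

theorem wght_le_exp {α : ℝ} (hα : 0 < α) (k m : ℕ) :
    wght α k m ≤ ((k + m : ℕ) + 1 : ℝ) ^ (⌊2 * α⌋₊ + 2) *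
      exp (-2 * (k + m : ℕ) * (k / (k + m : ℕ) - 1 / 2) ^ 2) / min α 1 ^ 2 := by
  have hb : 0 < min α 1 := lt_min hα one_pos
  refine (wght_le_choose_div hα k m).trans ?_
  rw [div_le_div_iff₀ (by positivity) (by positivity)]
  calc ((k + m : ℕ) + 1 : ℝ) ^ (⌊2 * α⌋₊ + 2) * (k + m).choose k * min α 1 ^ 2
      ≤ ((k + m : ℕ) + 1 : ℝ) ^ (⌊2 * α⌋₊ + 2) *
          (2 ^ (k + m) * exp (-2 * (k + m : ℕ) * (k / (k + m : ℕ) - 1 / 2) ^ 2)) *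
          min α 1 ^ 2 := by
        gcongr; exact Nat.choose_le_two_pow_mul_exp _ _
    _ = _ := by ring

theorem tendsto_add_one_pow_mul_exp_neg_mul_nat {b : ℝ} (hb : 0 < b) (p : ℕ) :
    Tendsto (fun n : ℕ => ((n : ℝ) + 1) ^ p * exp (-b * n)) atTop (nhds 0) := by
  have hshift : Tendsto (fun n : ℕ => (n : ℝ) + 1) atTop atTop :=
    tendsto_atTop_add_const_right _ 1 tendsto_natCast_atTop_atTop
  have h := ((tendsto_rpow_mul_exp_neg_mul_atTop_nhds_zero p b hb).comp hshift).const_mul (exp b)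
  rw [mul_zero] at h
  refine h.congr fun n => ?_
  simp only [Function.comp_apply, rpow_natCast]
  rw [mul_left_comm, ← exp_add]
  ring_nf

theorem stmt13_general (α : ℝ) (hα : 0 < α) (q0 : ℝ)
    (n0 : ℕ → ℕ) (hle : ∀ n, n0 n ≤ n)
    (hconv : Tendsto (fun n : ℕ => (n0 n : ℝ) / n) atTop (nhds q0))
    (c : ℝ) (hc : |c| < |q0 - 1/2|) :
    Tendsto (fun n : ℕ => Real.exp (2 * n * c^2) * wght α (n0 n) (n - n0 n))
      atTop (nhds 0) := by
  obtain ⟨δ, hδ, hgap⟩ :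
      ∃ δ > 0, ∀ᶠ n : ℕ in atTop, c ^ 2 + δ ≤ ((n0 n : ℝ) / n - 1 / 2) ^ 2 := by
    have hc2 : c ^ 2 < (q0 - 1 / 2) ^ 2 := sq_lt_sq.mpr hc
    refine ⟨((q0 - 1 / 2) ^ 2 - c ^ 2) / 2, by linarith, ?_⟩
    exact ((hconv.sub_const _).pow 2).eventually (eventually_ge_nhds (by linarith))
  have hlim := (tendsto_add_one_pow_mul_exp_neg_mul_nat (by positivity : 0 < 2 * δ)
    (⌊2 * α⌋₊ + 2)).div_const (min α 1 ^ 2)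
  rw [zero_div] at hlim
  refine squeeze_zero' (.of_forall fun n => by have := wght_pos hα (n0 n) (n - n0 n); positivity)
    ?_ hlim
  filter_upwards [hgap] with n hn
  have hW := wght_le_exp hα (n0 n) (n - n0 n)
  rw [Nat.add_sub_cancel' (hle n)] at hW
  calc exp (2 * n * c ^ 2) * wght α (n0 n) (n - n0 n)
      ≤ exp (2 * n * c ^ 2) * (((n : ℝ) + 1) ^ (⌊2 * α⌋₊ + 2) *
          exp (-2 * n * ((n0 n : ℝ) / n - 1 / 2) ^ 2) / min α 1 ^ 2) := by gcongr
    _ = ((n : ℝ) + 1) ^ (⌊2 * α⌋₊ + 2) *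
          exp (-2 * n * (((n0 n : ℝ) / n - 1 / 2) ^ 2 - c ^ 2)) / min α 1 ^ 2 := by
        rw [mul_div_assoc', mul_left_comm, ← exp_add]; ring_nf
    _ ≤ ((n : ℝ) + 1) ^ (⌊2 * α⌋₊ + 2) * exp (-(2 * δ) * n) / min α 1 ^ 2 := by
        gcongr _ * exp ?_ / _
        nlinarith [(n.cast_nonneg : (0 : ℝ) ≤ n)]

/-- If n0/n → q0 ≠ 1/2, then e^{2nc²}·w_n(Δ_n) → 0 for every |c| < |q0 − 1/2|. -/
theorem stmt13 (α : ℝ) (hα : 0 < α) (q0 : ℝ) (hq : q0 ≠ 1/2)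
    (n0 : ℕ → ℕ) (hle : ∀ n, n0 n ≤ n)
    (hconv : Tendsto (fun n : ℕ => (n0 n : ℝ) / n) atTop (nhds q0))
    (c : ℝ) (hc : |c| < |q0 - 1/2|) :
    Tendsto (fun n : ℕ => Real.exp (2 * n * c^2) * wght α (n0 n) (n - n0 n))
      atTop (nhds 0) :=
  stmt13_general α hα q0 n0 hle hconv c hc
end
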